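/- arXiv:1501.06410 — 10 statements merged into one kernel-verified Lean document; each statement's English description precedes it below -/
import Mathlib

section
/- Let ψ : S → T be a surjective semigroup homomorphism and ω a weight on S with ω ≥ ε for some 0 < ε < 1. Let ω→(t) = inf ω(ψ⁻¹(t)) be the pushforward weight. Then for any sequences (xₙ), (yₘ) of elements of T, there exist sequences (sₙ), (tₘ) in S with ψ(sₙ) = xₙ, ψ(tₘ) = yₘ, such that Ω→(xₙ, yₘ) ≤ (1-ε)⁻² · Ω(sₙ, tₘ) for all n, m, where Ω(s,t) = ω(st)/(ω(s)ω(t)) and Ω→(x,y) = ω→(xy)/(ω→(x)ω→(y)). -/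
open Filter Function

def IterLim (F : ℕ → ℕ → ℝ) (L : ℝ) : Prop :=
  ∃ g : ℕ → ℝ, (∀ n, Tendsto (fun m => F n m) atTop (nhds (g n))) ∧
    Tendsto g atTop (nhds L)

def ZeroCluster {S : Type*} (Om : S → S → ℝ) : Prop :=
  ∀ x y : ℕ → S, Injective x → Injective y → ∀ L₁ L₂ : ℝ,
    IterLim (fun n m => Om (x n) (y m)) L₁ →
    IterLim (fun m n => Om (x n) (y m)) L₂ →
    L₁ = 0 ∧ L₂ = 0

def IsWeight {S : Type*} [Mul S] (ω : S → ℝ) : Prop :=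
  (∀ s, 0 < ω s) ∧ ∀ s t, ω (s * t) ≤ ω s * ω t

/-!
Choose preimages `s` of `x` that are `(1 - ε)`-almost minimizers of `ω` on the fibre
`ψ⁻¹(x)`. This is possible because the infimum over a fibre is at least `ε > 0`, so
dividing it by `1 - ε < 1` strictly increases it. Then `ω→(xy) ≤ ω(st)` bounds the
numerator of `Ω→(x, y)`, while `(1 - ε) ω(s) ≤ ω→(x)` bounds its denominator.
-/

noncomputable def pushforwardWeight {S T : Type*} (ψ : S → T) (ω : S → ℝ) (u : T) : ℝ :=
  sInf (ω '' {a | ψ a = u})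

section PushforwardWeight

variable {S T : Type*} {ψ : S → T} {ω : S → ℝ}

theorem pushforwardWeight_le (hω : BddBelow (Set.range ω)) {a : S} {u : T} (ha : ψ a = u) :
    pushforwardWeight ψ ω u ≤ ω a :=
  csInf_le (hω.mono (Set.image_subset_range _ _)) ⟨a, ha, rfl⟩

theorem le_pushforwardWeight {u : T} (hu : ∃ a, ψ a = u) {ε : ℝ} (hbdd : ∀ s, ε ≤ ω s) :
    ε ≤ pushforwardWeight ψ ω u := by
  obtain ⟨a, ha⟩ := hu
  exact le_csInf ⟨ω a, a, ha, rfl⟩ (by rintro _ ⟨b, -, rfl⟩; exact hbdd b)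

theorem exists_mul_le_pushforwardWeight {u : T} (hu : ∃ a, ψ a = u)
    (hpos : 0 < pushforwardWeight ψ ω u) {c : ℝ} (hc0 : 0 < c) (hc1 : c < 1) :
    ∃ a, ψ a = u ∧ c * ω a ≤ pushforwardWeight ψ ω u := by
  obtain ⟨a₀, ha₀⟩ := hu
  have hlt : pushforwardWeight ψ ω u < pushforwardWeight ψ ω u / c :=
    (lt_div_iff₀ hc0).2 (mul_lt_of_lt_one_right hpos hc1)
  have hne : (ω '' {a | ψ a = u}).Nonempty := ⟨ω a₀, a₀, ha₀, rfl⟩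
  obtain ⟨_, ⟨a, ha, rfl⟩, hωa⟩ := exists_lt_of_csInf_lt hne hlt
  exact ⟨a, ha, by rw [mul_comm, ← le_div_iff₀ hc0]; exact hωa.le⟩

end PushforwardWeight

theorem pushforward_Omega_le_of_almost_minimal {S T : Type*} [Mul S] [Mul T] (ψ : S →ₙ* T)
    {ω : S → ℝ} (hω : ∀ a, 0 < ω a) {c : ℝ} (hc : 0 < c) {s t : S} {u v : T}
    (hsu : ψ s = u) (htv : ψ t = v) (hs : c * ω s ≤ pushforwardWeight ψ ω u)
    (ht : c * ω t ≤ pushforwardWeight ψ ω v) :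
    pushforwardWeight ψ ω (u * v) / (pushforwardWeight ψ ω u * pushforwardWeight ψ ω v)
      ≤ c⁻¹ ^ 2 * (ω (s * t) / (ω s * ω t)) := by
  have hbdd : BddBelow (Set.range ω) := ⟨0, by rintro _ ⟨a, rfl⟩; exact (hω a).le⟩
  have hst : ψ (s * t) = u * v := by rw [map_mul, hsu, htv]
  have hωs := hω s
  have hωt := hω t
  calc pushforwardWeight ψ ω (u * v) / (pushforwardWeight ψ ω u * pushforwardWeight ψ ω v)
      ≤ ω (s * t) / (c * ω s * (c * ω t)) :=
        div_le_div₀ (hω _).le (pushforwardWeight_le hbdd hst) (by positivity)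
          (mul_le_mul hs ht (by positivity) ((mul_pos hc hωs).le.trans hs))
    _ = c⁻¹ ^ 2 * (ω (s * t) / (ω s * ω t)) := by field_simp

theorem pushforward_Omega_bound_general {S T : Type*} [Semigroup S] [Semigroup T]
    (ψ : S →ₙ* T) (hsurj : Surjective ψ) (ω : S → ℝ)
    (ε : ℝ) (hε0 : 0 < ε) (hε1 : ε < 1) (hbdd : ∀ s, ε ≤ ω s)
    (x y : ℕ → T) :
    ∃ s t : ℕ → S, (∀ n, ψ (s n) = x n) ∧ (∀ m, ψ (t m) = y m) ∧
      ∀ n m,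
        (fun u v : T => sInf (ω '' {a | ψ a = u * v}) /
          (sInf (ω '' {a | ψ a = u}) * sInf (ω '' {a | ψ a = v}))) (x n) (y m)
        ≤ (1 - ε)⁻¹ ^ 2 * (ω (s n * t m) / (ω (s n) * ω (t m))) := by
  have hpick (u : T) : ∃ a, ψ a = u ∧ (1 - ε) * ω a ≤ pushforwardWeight ψ ω u :=
    exists_mul_le_pushforwardWeight (hsurj u) (hε0.trans_le (le_pushforwardWeight (hsurj u) hbdd))
      (by linarith) (by linarith)
  choose pick hpickψ hpickω using hpick
  refine ⟨pick ∘ x, pick ∘ y, fun n => hpickψ (x n), fun m => hpickψ (y m), fun n m => ?_⟩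
  exact pushforward_Omega_le_of_almost_minimal ψ (fun a => hε0.trans_le (hbdd a))
    (sub_pos.2 hε1) (hpickψ _) (hpickψ _) (hpickω _) (hpickω _)

theorem pushforward_Omega_bound {S T : Type*} [Semigroup S] [Semigroup T]
    (ψ : S →ₙ* T) (hsurj : Surjective ψ) (ω : S → ℝ) (hω : IsWeight ω)
    (ε : ℝ) (hε0 : 0 < ε) (hε1 : ε < 1) (hbdd : ∀ s, ε ≤ ω s)
    (x y : ℕ → T) :
    ∃ s t : ℕ → S, (∀ n, ψ (s n) = x n) ∧ (∀ m, ψ (t m) = y m) ∧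
      ∀ n m,
        (fun u v : T => sInf (ω '' {a | ψ a = u * v}) /
          (sInf (ω '' {a | ψ a = u}) * sInf (ω '' {a | ψ a = v}))) (x n) (y m)
        ≤ (1 - ε)⁻¹ ^ 2 * (ω (s n * t m) / (ω (s n) * ω (t m))) :=
  pushforward_Omega_bound_general ψ hsurj ω ε hε0 hε1 hbdd x y
end

section
/- Let F be the free semigroup on generators {a_k : k ≥ 1} with weight ω₁(a_{k₁}⋯a_{k_r}) = 1 + k₁ + ⋯ + k_r, and let Ω₁(x,y) = ω₁(xy)/(ω₁(x)ω₁(y)). Then Ω₁ is 0-cluster: for every pair of sequences (xₙ), (yₘ) of distinct elements of F, whenever both iterated limits limₙ limₘ Ω₁(xₙ,yₘ) and limₘ limₙ Ω₁(xₙ,yₘ) exist, they both equal 0. -/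
open Filter Function

noncomputable def freeWeight (x : FreeSemigroup ℕ+) : ℝ :=
  1 + (((x.head :: x.tail).map (fun k : ℕ+ => (k : ℝ))).sum)

/-! The weight is additive up to a constant, `ω(xy) = ω(x) + ω(y) - 1`, so for fixed `x`,
`Ω(x, y) → 1/ω(x)` as `ω(y) → ∞`. Only finitely many words have weight below any bound (words of
letter sum `n` are compositions of `n`), so `ω → ∞` along every injective sequence, and then
`1/ω(xₙ) → 0`. -/

open Topology FreeSemigroup

lemma Filter.Tendsto.comp_injective_atTop {S β : Type*} {u : S → β} {l : Filter β}
    (hu : Tendsto u cofinite l) {x : ℕ → S} (hx : Injective x) : Tendsto (u ∘ x) atTop l :=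
  Nat.cofinite_eq_atTop ▸ hu.comp hx.tendsto_cofinite

lemma IterLim.eq_of_tendsto {F : ℕ → ℕ → ℝ} {L L' : ℝ} {h : ℕ → ℝ} (hF : IterLim F L)
    (hinner : ∀ n, Tendsto (F n) atTop (𝓝 (h n))) (houter : Tendsto h atTop (𝓝 L')) :
    L = L' := by
  obtain ⟨g, hg, hL⟩ := hF
  obtain rfl : g = h := funext fun n => tendsto_nhds_unique (hg n) (hinner n)
  exact tendsto_nhds_unique hL houter

theorem ZeroCluster.of_tendsto_cofinite {S : Type*} {Om : S → S → ℝ} {f g : S → ℝ}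
    (hright : ∀ x, Tendsto (Om x) cofinite (𝓝 (f x)))
    (hleft : ∀ y, Tendsto (fun x => Om x y) cofinite (𝓝 (g y)))
    (hf : Tendsto f cofinite (𝓝 0)) (hg : Tendsto g cofinite (𝓝 0)) : ZeroCluster Om :=
  fun x y hx hy _ _ h₁ h₂ =>
    ⟨h₁.eq_of_tendsto (fun n => (hright (x n)).comp_injective_atTop hy)
        (hf.comp_injective_atTop hx),
      h₂.eq_of_tendsto (fun m => (hleft (y m)).comp_injective_atTop hx)
        (hg.comp_injective_atTop hy)⟩

lemma tendsto_add_sub_one_div_mul_atTop {a : ℝ} (ha : a ≠ 0) :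
    Tendsto (fun b : ℝ => (a + b - 1) / (a * b)) atTop (𝓝 a⁻¹) := by
  have hlim : Tendsto (fun b : ℝ => a⁻¹ + (a - 1) / a * b⁻¹) atTop (𝓝 a⁻¹) := by
    simpa using tendsto_const_nhds.add (tendsto_inv_atTop_zero.const_mul ((a - 1) / a))
  refine hlim.congr' ?_
  filter_upwards [eventually_ne_atTop 0] with b hb
  field_simp
  ring

theorem zeroCluster_of_map_mul_eq_add_sub_one {S : Type*} [Mul S] {ω : S → ℝ}
    (hmul : ∀ x y, ω (x * y) = ω x + ω y - 1) (hne : ∀ x, ω x ≠ 0)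
    (hω : Tendsto ω cofinite atTop) :
    ZeroCluster (fun x y => ω (x * y) / (ω x * ω y)) := by
  have hright x : Tendsto (fun y => ω (x * y) / (ω x * ω y)) cofinite (𝓝 (ω x)⁻¹) := by
    simpa [comp_def, hmul] using (tendsto_add_sub_one_div_mul_atTop (hne x)).comp hω
  have hleft y : Tendsto (fun x => ω (x * y) / (ω x * ω y)) cofinite (𝓝 (ω y)⁻¹) := by
    simpa [hmul, add_comm, mul_comm] using hright y
  exact .of_tendsto_cofinite hright hleft hω.inv_tendsto_atTop hω.inv_tendsto_atTop

lemma northcott_sum_map_pnatVal : Northcott fun l : List ℕ+ => (l.map PNat.val).sum where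
  finite_le N := by
    refine Set.Finite.of_finite_image (f := List.map PNat.val) ?_
      (List.map_injective_iff.2 PNat.coe_injective).injOn
    refine ((Set.finite_Iic N).biUnion fun n _ =>
      Set.finite_range (Composition.blocks (n := n))).subset ?_
    rintro _ ⟨l, hl, rfl⟩
    simp only [Set.mem_iUnion, Set.mem_range]
    exact ⟨_, Set.mem_Iic.2 hl, ⟨l.map PNat.val, by simp, rfl⟩, rfl⟩

lemma freeWeight_eq (x : FreeSemigroup ℕ+) :
    freeWeight x = 1 + (((toFreeMonoid x).toList.map PNat.val).sum : ℕ) := by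
  obtain ⟨k, ks⟩ := x
  simp [freeWeight, toFreeMonoid_mk_eq_cons, List.map_map, comp_def]

lemma freeWeight_mul (x y : FreeSemigroup ℕ+) :
    freeWeight (x * y) = freeWeight x + freeWeight y - 1 := by
  simp only [freeWeight_eq, map_mul, FreeMonoid.toList_mul, List.map_append, List.sum_append]
  push_cast
  ring

lemma freeWeight_pos (x : FreeSemigroup ℕ+) : 0 < freeWeight x := by
  rw [freeWeight_eq]
  positivity

lemma tendsto_freeWeight_cofinite : Tendsto freeWeight cofinite atTop := by
  have : TendstoCofinite (FreeMonoid.toList ∘ toFreeMonoid (α := ℕ+)) :=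
    tendstoCofinite_of_injective (FreeMonoid.toList.injective.comp toFreeMonoid_injective)
  have := northcott_sum_map_pnatVal
  have hsum := (northcott_iff_tendsto _).1
    (Northcott.comp_of_finite_fibers (FreeMonoid.toList ∘ toFreeMonoid)
      fun l : List ℕ+ => (l.map PNat.val).sum)
  simp_rw [funext freeWeight_eq]
  exact tendsto_atTop_add_const_left _ 1 (tendsto_natCast_atTop_atTop.comp hsum)

theorem freeWeight_zeroCluster :
    ZeroCluster (fun x y : FreeSemigroup ℕ+ =>
      freeWeight (x * y) / (freeWeight x * freeWeight y)) :=
  zeroCluster_of_map_mul_eq_add_sub_one freeWeight_mul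
    (fun x => (freeWeight_pos x).ne') tendsto_freeWeight_cofinite
end

section
/- A nonempty set X is countable if and only if there exists a function f : X → (0,∞) such that for every injective sequence (xₙ) of elements of X, the sequence (f(xₙ)) is unbounded. -/
open Filter Function

/-! The functions in question are exactly those tending to infinity along the cofinite filter,
i.e. those with finite sublevel sets. Such a function exhausts `X` by countably many finite
sublevel sets; conversely an injection `X → ℕ`, shifted by one, is such a function. -/

open Set

section

variable {X β : Type*}

theorem tendsto_cofinite_atTop_iff_forall_injective_not_bddAbove [LinearOrder β] [NoMaxOrder β]
    {f : X → β} :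
    Tendsto f cofinite atTop ↔ ∀ x : ℕ → X, Injective x → ¬ BddAbove (range (f ∘ x)) := by
  refine ⟨fun hf x hx => ?_, fun h => ?_⟩
  · have hfx : Tendsto (f ∘ x) atTop atTop :=
      hf.comp (Nat.cofinite_eq_atTop ▸ hx.tendsto_cofinite)
    exact not_bddAbove_of_tendsto_atTop hfx
  · refine tendsto_atTop.2 fun b => eventually_cofinite.2 ?_
    by_contra hinf
    let e := Set.Infinite.natEmbedding _ hinf
    refine h (fun n => e n) (Subtype.val_injective.comp e.injective) ⟨b, ?_⟩
    rintro _ ⟨n, rfl⟩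
    exact (not_le.1 (e n).2).le

theorem Filter.ker_atTop [Preorder β] [NoMaxOrder β] : (atTop : Filter β).ker = ∅ :=
  eq_empty_of_forall_notMem fun b hb =>
    (exists_gt b).elim fun c hc => (mem_ker.1 hb _ (Ioi_mem_atTop c)).not_gt hc

theorem countable_of_tendsto_cofinite_atTop [Preorder β] [NoMaxOrder β]
    [(atTop : Filter β).IsCountablyGenerated] {f : X → β} (hf : Tendsto f cofinite atTop) :
    Countable X := by
  have h := hf.countable_compl_preimage_ker
  rwa [ker_atTop, preimage_empty, compl_empty, countable_univ_iff] at h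

theorem exists_pos_tendsto_cofinite_atTop [Countable X] :
    ∃ f : X → ℝ, (∀ x, 0 < f x) ∧ Tendsto f cofinite atTop := by
  obtain ⟨g, hg⟩ := Countable.exists_injective_nat X
  have hg' : Tendsto (fun x => (g x : ℝ)) cofinite atTop :=
    tendsto_natCast_atTop_atTop.comp (Nat.cofinite_eq_atTop ▸ hg.tendsto_cofinite)
  exact ⟨fun x => g x + 1, fun x => by positivity, tendsto_atTop_add_const_right _ 1 hg'⟩

end

theorem countable_iff_unbounded_function_general {X : Type*} :
    Countable X ↔ ∃ f : X → ℝ, (∀ x, 0 < f x) ∧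
      ∀ x : ℕ → X, Injective x → ¬ BddAbove (Set.range (fun n => f (x n))) := by
  refine ⟨fun _ => ?_, fun ⟨f, _, hf⟩ => ?_⟩
  · obtain ⟨f, hpos, hf⟩ := exists_pos_tendsto_cofinite_atTop (X := X)
    exact ⟨f, hpos, tendsto_cofinite_atTop_iff_forall_injective_not_bddAbove.1 hf⟩
  · exact countable_of_tendsto_cofinite_atTop
      (tendsto_cofinite_atTop_iff_forall_injective_not_bddAbove.2 hf)

theorem countable_iff_unbounded_function {X : Type*} (hX : Nonempty X) :
    Countable X ↔ ∃ f : X → ℝ, (∀ x, 0 < f x) ∧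
      ∀ x : ℕ → X, Injective x → ¬ BddAbove (Set.range (fun n => f (x n))) :=
  countable_iff_unbounded_function_general
end

section
/- Let S = M⁰(G, I, Λ; P) be a Rees matrix semigroup with zero over a group G, and suppose ω is a weight on S bounded below by ε > 0 such that Ω(s,t) = ω(st)/(ω(s)ω(t)) is 0-cluster. Then the index set I is countable. -/
open Filter Function

def reesMul {G I Λ : Type*} [Group G] (P : Λ → I → Option G) :
    Option (I × G × Λ) → Option (I × G × Λ) → Option (I × G × Λ)
  | some (i, a, l), some (j, b, m) => (P l j).map (fun p => (i, a * p * b, m))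
  | _, _ => none

/-!
Split the uncountable index set `I` according to whether the sandwich entry `p_{λi}` vanishes for a
fixed `λ`; one half is uncountable. An uncountable family of positive reals contains an injective
sequence converging to a positive limit, so we get injective sequences `xₙ = (iₙ, 1, λ)` and
`yₘ` with `Ω(xₙ, yₘ) = αₙ βₘ`, where `α → a` and `β → b` with `ab ≠ 0`:
if `p_{λi} = 0` take `yₘ = xₘ`, so that `xₙ yₘ = 0`; otherwise take `yₘ = (iₘ, p_{λiₘ}⁻¹, λ)`,
so that `xₙ yₘ = xₙ`. Both iterated limits of `Ω(xₙ, yₘ)` are then `ab ≠ 0`.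
-/

open Set Topology

theorem exists_injective_tendsto_of_not_countable {ι X : Type*} [TopologicalSpace X]
    [SigmaCompactSpace X] [FirstCountableTopology X] (hι : ¬Countable ι) (f : ι → X) :
    ∃ u : ℕ → ι, Injective u ∧ ∃ a, Tendsto (f ∘ u) atTop (𝓝 a) := by
  obtain ⟨n, hn⟩ : ∃ n, ¬(f ⁻¹' compactCovering X n).Countable := by
    by_contra! h
    refine hι (countable_univ_iff.mp ?_)
    simpa [← preimage_iUnion, iUnion_compactCovering] using countable_iUnion h
  let v := Set.Infinite.natEmbedding _ fun hfin => hn hfin.countable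
  obtain ⟨a, -, φ, hφ, hlim⟩ :=
    (isCompact_compactCovering X n).tendsto_subseq fun k => (v k).2
  exact ⟨fun k => v (φ k), Subtype.val_injective.comp (v.injective.comp hφ.injective), a, hlim⟩

theorem exists_injective_tendsto_pos_of_not_countable {ι : Type*} (hι : ¬Countable ι)
    {f : ι → ℝ} (hf : ∀ i, 0 < f i) :
    ∃ u : ℕ → ι, Injective u ∧ ∃ a, 0 < a ∧ Tendsto (f ∘ u) atTop (𝓝 a) := by
  have : LocallyCompactSpace (Ioi (0 : ℝ)) := isOpen_Ioi.locallyCompactSpace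
  obtain ⟨u, hu, a, hlim⟩ :=
    exists_injective_tendsto_of_not_countable hι fun i => (⟨f i, hf i⟩ : Ioi (0 : ℝ))
  exact ⟨u, hu, a, a.2, continuous_subtype_val.continuousAt.tendsto.comp hlim⟩

theorem iterLim_mul {α β : ℕ → ℝ} {a b : ℝ} (hα : Tendsto α atTop (𝓝 a))
    (hβ : Tendsto β atTop (𝓝 b)) : IterLim (fun n m => α n * β m) (a * b) :=
  ⟨fun n => α n * b, fun _ => tendsto_const_nhds.mul hβ, hα.mul tendsto_const_nhds⟩

theorem ZeroCluster.mul_eq_zero {S : Type*} {Om : S → S → ℝ} (hcl : ZeroCluster Om)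
    {x y : ℕ → S} (hx : Injective x) (hy : Injective y) {α β : ℕ → ℝ} {a b : ℝ}
    (hα : Tendsto α atTop (𝓝 a)) (hβ : Tendsto β atTop (𝓝 b))
    (h : ∀ n m, Om (x n) (y m) = α n * β m) : a * b = 0 := by
  have h₁ := iterLim_mul hα hβ
  have h₂ := iterLim_mul hβ hα
  simp only [← h] at h₁
  simp only [mul_comm (β _), ← h] at h₂
  exact (hcl x y hx hy _ _ h₁ h₂).1

section Rees

variable {G I Λ : Type*} [Group G] {P : Λ → I → Option G}

theorem reesMul_some_of_eq_none {i j : I} {a b : G} {l m : Λ} (h : P l j = none) :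
    reesMul P (some (i, a, l)) (some (j, b, m)) = none := by
  simp [reesMul, h]

theorem reesMul_some_of_eq_some {i j : I} {a b p : G} {l m : Λ} (h : P l j = some p) :
    reesMul P (some (i, a, l)) (some (j, b, m)) = some (i, a * p * b, m) := by
  simp [reesMul, h]

variable {ω : Option (I × G × Λ) → ℝ}

theorem countable_setOf_eq_none_of_zeroCluster (hpos : ∀ s, 0 < ω s)
    (hcl : ZeroCluster fun s t => ω (reesMul P s t) / (ω s * ω t)) (l : Λ) :
    {i | P l i = none}.Countable := by
  by_contra hJ
  obtain ⟨u, hu, a, ha, hlim⟩ := exists_injective_tendsto_pos_of_not_countable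
    (mt countable_coe_iff.mp hJ) (f := fun i => ω (some ((i : I), 1, l))) fun _ => hpos _
  let x : ℕ → Option (I × G × Λ) := fun n => some ((u n : I), 1, l)
  have hx : Injective x := fun n m h => hu (Subtype.ext (by simpa [x] using h))
  have hprod : ∀ n m, ω (reesMul P (x n) (x m)) / (ω (x n) * ω (x m)) =
      ω none / ω (x n) * (ω (x m))⁻¹ := fun n m => by
    rw [reesMul_some_of_eq_none (u m).2, div_mul_eq_div_div, div_eq_mul_inv]
  have := hcl.mul_eq_zero hx hx (tendsto_const_nhds.div hlim ha.ne') (hlim.inv₀ ha.ne') hprod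
  have : 0 < ω none / a * a⁻¹ := by have := hpos none; positivity
  linarith

theorem countable_setOf_ne_none_of_zeroCluster (hpos : ∀ s, 0 < ω s)
    (hcl : ZeroCluster fun s t => ω (reesMul P s t) / (ω s * ω t)) (l : Λ) :
    {i | P l i ≠ none}.Countable := by
  by_contra hJ
  choose q hq using fun i : {i | P l i ≠ none} => Option.ne_none_iff_exists'.mp i.2
  obtain ⟨u, hu, b, hb, hlim⟩ := exists_injective_tendsto_pos_of_not_countable
    (mt countable_coe_iff.mp hJ) (f := fun i => ω (some ((i : I), (q i)⁻¹, l))) fun _ => hpos _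
  let x : ℕ → Option (I × G × Λ) := fun n => some ((u n : I), 1, l)
  let y : ℕ → Option (I × G × Λ) := fun m => some ((u m : I), (q (u m))⁻¹, l)
  have hx : Injective x := fun n m h => hu (Subtype.ext (by simpa [x] using h))
  have hy : Injective y := fun n m h => hu (Subtype.ext (by simp [y] at h; exact h.1))
  have hprod : ∀ n m, ω (reesMul P (x n) (y m)) / (ω (x n) * ω (y m)) = 1 * (ω (y m))⁻¹ :=
    fun n m => by
      rw [reesMul_some_of_eq_some (hq (u m)), one_mul, mul_inv_cancel, div_mul_eq_div_div,
        div_self (hpos _).ne', one_div, one_mul]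
  have := hcl.mul_eq_zero hx hy tendsto_const_nhds (hlim.inv₀ hb.ne') hprod
  simp [hb.ne'] at this

end Rees

theorem rees_index_countable_general {G I Λ : Type*} [Group G] [Nonempty Λ]
    (P : Λ → I → Option G) (ω : Option (I × G × Λ) → ℝ)
    (hpos : ∀ s, 0 < ω s)
    (hcl : ZeroCluster (fun s t => ω (reesMul P s t) / (ω s * ω t))) :
    Countable I := by
  obtain ⟨l⟩ := ‹Nonempty Λ›
  have hsplit : {i | P l i = none} ∪ {i | P l i ≠ none} = univ := by
    ext i; simp [em]
  rw [← countable_univ_iff, ← hsplit]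
  exact (countable_setOf_eq_none_of_zeroCluster hpos hcl l).union
    (countable_setOf_ne_none_of_zeroCluster hpos hcl l)

theorem rees_index_countable {G I Λ : Type*} [Group G] [Nonempty Λ]
    (P : Λ → I → Option G) (ω : Option (I × G × Λ) → ℝ)
    (hpos : ∀ s, 0 < ω s)
    (hsub : ∀ s t, ω (reesMul P s t) ≤ ω s * ω t)
    (ε : ℝ) (hε : 0 < ε) (hbdd : ∀ s, ε ≤ ω s)
    (hcl : ZeroCluster (fun s t => ω (reesMul P s t) / (ω s * ω t))) :
    Countable I :=
  rees_index_countable_general P ω hpos hcl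
end

section
/- Let S = M⁰(G, I, Λ; P) be a Rees matrix semigroup with zero over a group G, and suppose ω is a weight on S bounded below such that Ω is 0-cluster. Fix i₀ ∈ I and λ₀ ∈ Λ with p_{λ₀ i₀} ≠ 0, and define ω₀ : G → (0,∞) by ω₀(g) = ω(i₀, g·p_{λ₀ i₀}⁻¹, λ₀). Then ω₀ is a weight on G and Ω₀(g,h) = ω₀(gh)/(ω₀(g)ω₀(h)) is 0-cluster on G. -/
open Filter Function

theorem ZeroCluster.comp_injective {S T : Type*} {Om : S → S → ℝ} (hOm : ZeroCluster Om)
    {f : T → S} (hf : Injective f) : ZeroCluster (fun a b => Om (f a) (f b)) :=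
  fun x y hx hy L₁ L₂ => hOm (f ∘ x) (f ∘ y) (hf.comp hx) (hf.comp hy) L₁ L₂

theorem IsWeight.of_map_mul {S T : Type*} [Mul T] {m : S → S → S} {ω : S → ℝ}
    (hpos : ∀ s, 0 < ω s) (hsub : ∀ s t, ω (m s t) ≤ ω s * ω t)
    {f : T → S} (hf : ∀ a b, m (f a) (f b) = f (a * b)) : IsWeight (ω ∘ f) :=
  ⟨fun a => hpos (f a), fun a b => by simpa only [comp_apply, hf] using hsub (f a) (f b)⟩

section ReesCorner

variable {G I Λ : Type*} [Group G]

/-- The shift by `p⁻¹` makes this copy of `G` multiplicative: `(g p⁻¹) p (h p⁻¹) = (g h) p⁻¹`. -/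
def reesCorner (i₀ : I) (l₀ : Λ) (p : G) (g : G) : Option (I × G × Λ) :=
  some (i₀, g * p⁻¹, l₀)

theorem reesCorner_injective (i₀ : I) (l₀ : Λ) (p : G) : Injective (reesCorner i₀ l₀ p) := by
  intro g h hgh
  simpa [reesCorner] using hgh

theorem reesMul_reesCorner {P : Λ → I → Option G} {i₀ : I} {l₀ : Λ} {p : G}
    (hp : P l₀ i₀ = some p) (g h : G) :
    reesMul P (reesCorner i₀ l₀ p g) (reesCorner i₀ l₀ p h) = reesCorner i₀ l₀ p (g * h) := by
  simp only [reesCorner, reesMul, hp, Option.map_some]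
  group

end ReesCorner

theorem rees_group_weight_general {G I Λ : Type*} [Group G]
    (P : Λ → I → Option G) (ω : Option (I × G × Λ) → ℝ)
    (hpos : ∀ s, 0 < ω s)
    (hsub : ∀ s t, ω (reesMul P s t) ≤ ω s * ω t)
    (hcl : ZeroCluster (fun s t => ω (reesMul P s t) / (ω s * ω t)))
    (i₀ : I) (l₀ : Λ) (p : G) (hp : P l₀ i₀ = some p) :
    IsWeight (fun g : G => ω (some (i₀, g * p⁻¹, l₀))) ∧
    ZeroCluster (fun g h : G =>
      ω (some (i₀, (g * h) * p⁻¹, l₀)) /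
        (ω (some (i₀, g * p⁻¹, l₀)) * ω (some (i₀, h * p⁻¹, l₀)))) := by
  have hmul := reesMul_reesCorner hp
  refine ⟨IsWeight.of_map_mul hpos hsub hmul, ?_⟩
  have := hcl.comp_injective (reesCorner_injective i₀ l₀ p)
  simp only [hmul] at this
  exact this

theorem rees_group_weight {G I Λ : Type*} [Group G]
    (P : Λ → I → Option G) (ω : Option (I × G × Λ) → ℝ)
    (hpos : ∀ s, 0 < ω s)
    (hsub : ∀ s t, ω (reesMul P s t) ≤ ω s * ω t)
    (ε : ℝ) (hε : 0 < ε) (hbdd : ∀ s, ε ≤ ω s)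
    (hcl : ZeroCluster (fun s t => ω (reesMul P s t) / (ω s * ω t)))
    (i₀ : I) (l₀ : Λ) (p : G) (hp : P l₀ i₀ = some p) :
    IsWeight (fun g : G => ω (some (i₀, g * p⁻¹, l₀))) ∧
    ZeroCluster (fun g h : G =>
      ω (some (i₀, (g * h) * p⁻¹, l₀)) /
        (ω (some (i₀, g * p⁻¹, l₀)) * ω (some (i₀, h * p⁻¹, l₀)))) :=
  rees_group_weight_general P ω hpos hsub hcl i₀ l₀ p hp
end

section
/- Every uncountable group G admits no weight ω bounded below for which Ω(g,h) = ω(gh)/(ω(g)ω(h)) is 0-cluster. Equivalently: if a group G admits a bounded below weight ω such that Ω is 0-cluster, then G is countable. -/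
open Filter Function

/-!
If `G` is uncountable, some sublevel set `{g | ω g ≤ k}` is infinite. Along an injective
sequence `xₙ` in it, `Ω(xₙ, xₘ) ≥ ε / k²` because `ω ≥ ε`, and `Ω ≤ 1` by submultiplicativity.
Compactness of `[ε / k², 1]` yields subsequences along which both iterated limits exist, and
these limits are at least `ε / k² > 0`, so `Ω` is not 0-cluster.
-/

open Set

theorem IterLim.comp_tendsto {F : ℕ → ℕ → ℝ} {L : ℝ} (h : IterLim F L) {φ ψ : ℕ → ℕ}
    (hφ : Tendsto φ atTop atTop) (hψ : Tendsto ψ atTop atTop) :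
    IterLim (fun n m => F (φ n) (ψ m)) L :=
  let ⟨g, hrow, hg⟩ := h
  ⟨g ∘ φ, fun n => (hrow (φ n)).comp hψ, hg.comp hφ⟩

theorem exists_strictMono_iterLim {K : Set ℝ} (hK : IsCompact K) {F : ℕ → ℕ → ℝ}
    (hF : ∀ n m, F n m ∈ K) :
    ∃ φ ψ : ℕ → ℕ, StrictMono φ ∧ StrictMono ψ ∧
      ∃ L ∈ K, IterLim (fun n m => F (φ n) (ψ m)) L := by
  obtain ⟨r, hr, ψ, hψ, hcols⟩ := (isCompact_univ_pi fun _ : ℕ => hK).tendsto_subseq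
    (x := fun m n => F n m) (fun m n _ => hF n m)
  rw [tendsto_pi_nhds] at hcols
  obtain ⟨L, hL, φ, hφ, hrφ⟩ := hK.tendsto_subseq (x := r) (fun n => hr n (mem_univ n))
  exact ⟨φ, ψ, hφ, hψ, L, hL, r ∘ φ, fun n => hcols (φ n), hrφ⟩

theorem exists_strictMono_iterLim_iterLim {K : Set ℝ} (hK : IsCompact K) {F : ℕ → ℕ → ℝ}
    (hF : ∀ n m, F n m ∈ K) :
    ∃ φ ψ : ℕ → ℕ, StrictMono φ ∧ StrictMono ψ ∧
      ∃ L₁ ∈ K, ∃ L₂ ∈ K, IterLim (fun n m => F (φ n) (ψ m)) L₁ ∧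
        IterLim (fun m n => F (φ n) (ψ m)) L₂ := by
  obtain ⟨φ₁, ψ₁, hφ₁, hψ₁, L₁, hL₁, hlim₁⟩ := exists_strictMono_iterLim hK hF
  obtain ⟨ψ₂, φ₂, hψ₂, hφ₂, L₂, hL₂, hlim₂⟩ :=
    exists_strictMono_iterLim hK (F := fun m n => F (φ₁ n) (ψ₁ m)) fun m n => hF _ _
  exact ⟨φ₁ ∘ φ₂, ψ₁ ∘ ψ₂, hφ₁.comp hφ₂, hψ₁.comp hψ₂, L₁, hL₁, L₂, hL₂,
    hlim₁.comp_tendsto hφ₂.tendsto_atTop hψ₂.tendsto_atTop, hlim₂⟩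

theorem not_zeroCluster_of_mem_Icc {S : Type*} {Om : S → S → ℝ} {A : Set S}
    (hA : A.Infinite) {c d : ℝ} (hc : 0 < c) (hOm : ∀ a ∈ A, ∀ b ∈ A, Om a b ∈ Icc c d) :
    ¬ ZeroCluster Om := by
  intro hcl
  set x : ℕ → S := fun n => hA.natEmbedding A n
  have hx : Injective x := Subtype.coe_injective.comp (hA.natEmbedding A).injective
  have hxA : ∀ n, x n ∈ A := fun n => (hA.natEmbedding A n).2
  obtain ⟨φ, ψ, hφ, hψ, L₁, hL₁, L₂, -, hlim₁, hlim₂⟩ :=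
    exists_strictMono_iterLim_iterLim isCompact_Icc fun n m => hOm _ (hxA n) _ (hxA m)
  have hL₁_zero := (hcl (x ∘ φ) (x ∘ ψ) (hx.comp hφ.injective) (hx.comp hψ.injective)
    L₁ L₂ hlim₁ hlim₂).1
  exact hc.not_ge (hL₁_zero ▸ hL₁.1)

theorem exists_nat_infinite_setOf_le {α : Type*} [Uncountable α] (f : α → ℝ) :
    ∃ k : ℕ, {a | f a ≤ k}.Infinite := by
  by_contra! hfin
  have hcover : (⋃ k : ℕ, {a | f a ≤ k}) = univ :=
    eq_univ_of_forall fun a => mem_iUnion.2 (exists_nat_ge (f a))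
  exact not_countable_univ (hcover ▸ countable_iUnion fun k => (hfin k).countable)

namespace IsWeight

variable {S : Type*} [Mul S] {ω : S → ℝ}

theorem div_mul_le_one (hω : IsWeight ω) (s t : S) : ω (s * t) / (ω s * ω t) ≤ 1 :=
  (div_le_one (mul_pos (hω.1 s) (hω.1 t))).2 (hω.2 s t)

theorem div_le_div_mul_of_le {ε k : ℝ} (hω : IsWeight ω) (hbdd : ∀ s, ε ≤ ω s) {s t : S}
    (hs : ω s ≤ k) (ht : ω t ≤ k) : ε / (k * k) ≤ ω (s * t) / (ω s * ω t) :=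
  div_le_div₀ (hω.1 _).le (hbdd _) (mul_pos (hω.1 s) (hω.1 t))
    (mul_le_mul hs ht (hω.1 t).le ((hω.1 s).le.trans hs))

end IsWeight

theorem group_zeroCluster_countable {G : Type*} [Group G]
    (ω : G → ℝ) (hω : IsWeight ω) (ε : ℝ) (hε : 0 < ε) (hbdd : ∀ g, ε ≤ ω g)
    (hcl : ZeroCluster (fun g h : G => ω (g * h) / (ω g * ω h))) :
    Countable G := by
  by_contra hG
  have : Uncountable G := not_countable_iff.1 hG
  obtain ⟨k, hk⟩ := exists_nat_infinite_setOf_le ω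
  obtain ⟨g, hg⟩ := hk.nonempty
  have hk_pos : (0 : ℝ) < k := (hω.1 g).trans_le hg
  refine not_zeroCluster_of_mem_Icc (c := ε / (k * k)) (d := 1) hk (by positivity)
    (fun s hs t ht => ?_) hcl
  exact ⟨hω.div_le_div_mul_of_le hbdd hs ht, hω.div_mul_le_one s t⟩
end

section
/- If S is an uncountable weakly cancellative semigroup, then S admits no bounded below weight ω for which Ω(s,t) = ω(st)/(ω(s)ω(t)) is 0-cluster. -/
/-! An uncountable `S` is not the union of the countably many sublevel sets `{s | ω s ≤ N}`, so
one of them is infinite. On it the ratio `ω (s * t) / (ω s * ω t)` is trapped in `[ε / N², 1]`, and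
a diagonal extraction along an enumeration of that set produces two injective sequences whose
iterated limits exist; they lie in `[ε / N², 1]` and therefore cannot vanish. -/

open Filter Function

theorem exists_infinite_setOf_le_of_not_countable {α : Type*} (hα : ¬ Countable α) (f : α → ℝ) :
    ∃ N : ℕ, {a | f a ≤ N}.Infinite := by
  by_contra! hfin
  refine hα (Set.countable_univ_iff.mp ?_)
  refine (Set.countable_iUnion fun N => (hfin N).countable).mono ?_
  exact fun a _ => Set.mem_iUnion.mpr ⟨⌈f a⌉₊, Nat.le_ceil (f a)⟩

theorem IsWeight.div_mem_Icc {S : Type*} [Mul S] {ω : S → ℝ} (hω : IsWeight ω) {ε N : ℝ}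
    (hε : 0 ≤ ε) {s t : S} (hst : ε ≤ ω (s * t)) (hs : ω s ≤ N) (ht : ω t ≤ N) :
    ω (s * t) / (ω s * ω t) ∈ Set.Icc (ε / (N * N)) 1 := by
  have hden : 0 < ω s * ω t := mul_pos (hω.1 s) (hω.1 t)
  have hN : 0 < N * N := by nlinarith [hω.1 s]
  refine ⟨?_, div_le_one_of_le₀ (hω.2 s t) hden.le⟩
  rw [div_le_div_iff₀ hN hden]
  calc ε * (ω s * ω t) ≤ ε * (N * N) :=
        mul_le_mul_of_nonneg_left (mul_le_mul hs ht (hω.1 t).le (hω.1 s |>.le.trans hs)) hε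
    _ ≤ ω (s * t) * (N * N) := mul_le_mul_of_nonneg_right hst hN.le

theorem IsCompact.exists_iterLim_comp_strictMono {K : Set ℝ} (hK : IsCompact K)
    {a : ℕ → ℕ → ℝ} (ha : ∀ n m, a n m ∈ K) :
    ∃ φ ψ : ℕ → ℕ, StrictMono φ ∧ StrictMono ψ ∧ ∃ L₁ ∈ K, ∃ L₂ ∈ K,
      IterLim (fun n m => a (φ n) (ψ m)) L₁ ∧ IterLim (fun m n => a (φ n) (ψ m)) L₂ := by
  have hKpi : IsCompact (Set.univ.pi fun _ : ℕ => K) := isCompact_univ_pi fun _ => hK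
  obtain ⟨f, hf, φ, hφ, hcol⟩ := hKpi.tendsto_subseq (x := a) fun n m _ => ha n m
  obtain ⟨g, hg, ψ, hψ, hrow⟩ :=
    hKpi.tendsto_subseq (x := fun m k => a (φ k) m) fun m k _ => ha (φ k) m
  rw [tendsto_pi_nhds] at hcol hrow
  obtain ⟨L₁, hL₁, σ, hσ, hg_lim⟩ := hK.tendsto_subseq (x := g) fun k => hg k trivial
  obtain ⟨L₂, hL₂, ρ, hρ, hf_lim⟩ :=
    hK.tendsto_subseq (x := fun j => f (ψ j)) fun j => hf (ψ j) trivial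
  refine ⟨φ ∘ σ, ψ ∘ ρ, hφ.comp hσ, hψ.comp hρ, L₁, hL₁, L₂, hL₂, ?_, ?_⟩
  · exact ⟨fun n => g (σ n), fun n => (hrow (σ n)).comp hρ.tendsto_atTop, hg_lim⟩
  · exact ⟨fun m => f (ψ (ρ m)), fun m => (hcol (ψ (ρ m))).comp hσ.tendsto_atTop, hf_lim⟩

theorem weakly_cancellative_uncountable_general {S : Type*} [Semigroup S]
    (hunc : ¬ Countable S) :
    ¬ ∃ (ω : S → ℝ) (ε : ℝ), IsWeight ω ∧ 0 < ε ∧ (∀ s, ε ≤ ω s) ∧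
      ZeroCluster (fun s t : S => ω (s * t) / (ω s * ω t)) := by
  rintro ⟨ω, ε, hω, hε, hlb, hzc⟩
  obtain ⟨N, hN⟩ := exists_infinite_setOf_le_of_not_countable hunc ω
  let e := hN.natEmbedding
  have he : Injective fun n => (e n : S) := Subtype.coe_injective.comp e.injective
  have hbound : ∀ n, ω (e n) ≤ N := fun n => (e n).2
  obtain ⟨φ, ψ, hφ, hψ, L₁, hL₁, L₂, -, h₁, h₂⟩ := isCompact_Icc.exists_iterLim_comp_strictMono
    fun n m => hω.div_mem_Icc hε.le (hlb _) (hbound n) (hbound m)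
  have hL₁_zero := (hzc _ _ (he.comp hφ.injective) (he.comp hψ.injective) L₁ L₂ h₁ h₂).1
  have hN_pos : (0 : ℝ) < N := (hω.1 _).trans_le (hbound 0)
  have : 0 < ε / (N * N) := by positivity
  linarith [hL₁.1]

theorem weakly_cancellative_uncountable {S : Type*} [Semigroup S]
    (hwc : ∀ s t : S, {x : S | s * x = t}.Finite ∧ {x : S | x * s = t}.Finite)
    (hunc : ¬ Countable S) :
    ¬ ∃ (ω : S → ℝ) (ε : ℝ), IsWeight ω ∧ 0 < ε ∧ (∀ s, ε ≤ ω s) ∧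
      ZeroCluster (fun s t : S => ω (s * t) / (ω s * ω t)) :=
  weakly_cancellative_uncountable_general hunc
end

section
/- If (sₙ) is an injective sequence in a group G, then there exist subsequences (xₖ) = (s_{n_k}) and (yₗ) = (s_{m_l}) such that {xₖ yₗ : k < l} ∩ {xₖ yₗ : k > l} = ∅. -/
open Filter Function

section Aux

variable {G : Type*} [Group G]

private lemma exists_good (s : ℕ → G) (hs : Injective s) (f : ℕ → ℕ) (t : ℕ) :
    ∃ j, (∀ t' < t, f t' < j) ∧ ∀ t₁ < t, ∀ t₂ < t, ∀ t₃ < t,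
      s j ≠ s (f t₁) * s (f t₂) * (s (f t₃))⁻¹ ∧
      s j ≠ (s (f t₁))⁻¹ * s (f t₂) * s (f t₃) := by
  classical
  set W : Finset G :=
    ((Finset.range t ×ˢ Finset.range t ×ˢ Finset.range t).image
      (fun p => s (f p.1) * s (f p.2.1) * (s (f p.2.2))⁻¹)) ∪
    ((Finset.range t ×ˢ Finset.range t ×ˢ Finset.range t).image
      (fun p => (s (f p.1))⁻¹ * s (f p.2.1) * s (f p.2.2))) with hW
  have hfin : (s ⁻¹' (W : Set G)).Finite :=
    Set.Finite.preimage hs.injOn W.finite_toSet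
  have hinf : ((s ⁻¹' (W : Set G))ᶜ).Infinite := hfin.infinite_compl
  obtain ⟨j, hj, hjg⟩ := hinf.exists_gt ((Finset.range t).sup f)
  refine ⟨j, ?_, ?_⟩
  · intro t' ht'
    exact lt_of_le_of_lt (Finset.le_sup (Finset.mem_range.mpr ht')) hjg
  · intro t₁ h1 t₂ h2 t₃ h3
    have hjW : s j ∉ W := hj
    constructor
    · intro hEq
      apply hjW
      refine Finset.mem_union_left _ (Finset.mem_image.mpr ⟨⟨t₁, t₂, t₃⟩, ?_, hEq.symm⟩)
      simp [Finset.mem_product, h1, h2, h3]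
    · intro hEq
      apply hjW
      refine Finset.mem_union_right _ (Finset.mem_image.mpr ⟨⟨t₁, t₂, t₃⟩, ?_, hEq.symm⟩)
      simp [Finset.mem_product, h1, h2, h3]

private noncomputable def pick (s : ℕ → G) (hs : Injective s) : ℕ → ℕ
  | t => (exists_good s hs (fun t' => if h : t' < t then pick s hs t' else 0) t).choose
  decreasing_by all_goals assumption

private lemma pick_eq (s : ℕ → G) (hs : Injective s) (t : ℕ) :
    pick s hs t =
      (exists_good s hs (fun t' => if h : t' < t then pick s hs t' else 0) t).choose := by
  rw [pick]

private lemma pick_strictMono (s : ℕ → G) (hs : Injective s) :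
    StrictMono (pick s hs) := by
  intro a b hab
  have h := (exists_good s hs (fun t' => if h : t' < b then pick s hs t' else 0) b).choose_spec.1
    a hab
  simp only [dif_pos hab] at h
  rw [pick_eq s hs b]
  exact h

private lemma pick_ne (s : ℕ → G) (hs : Injective s) (t₁ t₂ t₃ t : ℕ)
    (h1 : t₁ < t) (h2 : t₂ < t) (h3 : t₃ < t) :
    s (pick s hs t) ≠ s (pick s hs t₁) * s (pick s hs t₂) * (s (pick s hs t₃))⁻¹ ∧
    s (pick s hs t) ≠ (s (pick s hs t₁))⁻¹ * s (pick s hs t₂) * s (pick s hs t₃) := by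
  have h := (exists_good s hs (fun t' => if h : t' < t then pick s hs t' else 0) t).choose_spec.2
    t₁ h1 t₂ h2 t₃ h3
  simp only [dif_pos h1, dif_pos h2, dif_pos h3] at h
  rw [pick_eq s hs t]
  exact h

private lemma key (s : ℕ → G) (hs : Injective s) (k l k' l' : ℕ)
    (hk : k ≠ k') (hl : l ≠ l')
    (heq : s (pick s hs (2*k)) * s (pick s hs (2*l+1)) =
           s (pick s hs (2*k')) * s (pick s hs (2*l'+1))) : False := by
  rcases (show (2*k < 2*l+1 ∧ 2*k' < 2*l+1 ∧ 2*l'+1 < 2*l+1) ∨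
      (2*k < 2*l'+1 ∧ 2*k' < 2*l'+1 ∧ 2*l+1 < 2*l'+1) ∨
      (2*l+1 < 2*k ∧ 2*k' < 2*k ∧ 2*l'+1 < 2*k) ∨
      (2*l+1 < 2*k' ∧ 2*k < 2*k' ∧ 2*l'+1 < 2*k') from by omega) with
    ⟨h1, h2, h3⟩ | ⟨h1, h2, h3⟩ | ⟨h1, h2, h3⟩ | ⟨h1, h2, h3⟩
  · -- 2*l+1 is the max
    apply (pick_ne s hs (2*k) (2*k') (2*l'+1) (2*l+1) h1 h2 h3).2
    rw [mul_assoc, ← heq, inv_mul_cancel_left]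
  · -- 2*l'+1 is the max
    apply (pick_ne s hs (2*k') (2*k) (2*l+1) (2*l'+1) h2 h1 h3).2
    rw [mul_assoc, heq, inv_mul_cancel_left]
  · -- 2*k is the max
    apply (pick_ne s hs (2*k') (2*l'+1) (2*l+1) (2*k) h2 h3 h1).1
    rw [← heq, mul_inv_cancel_right]
  · -- 2*k' is the max
    apply (pick_ne s hs (2*k) (2*l+1) (2*l'+1) (2*k') h2 h1 h3).1
    rw [heq, mul_inv_cancel_right]

end Aux

theorem group_triangle_subsequences {G : Type*} [Group G]
    (s : ℕ → G) (hs : Injective s) :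
    ∃ n m : ℕ → ℕ, StrictMono n ∧ StrictMono m ∧
      {z : G | ∃ k l, k < l ∧ s (n k) * s (m l) = z} ∩
        {z : G | ∃ k l, l < k ∧ s (n k) * s (m l) = z} = ∅ := by
  have hpm := pick_strictMono s hs
  have hpi : Injective (pick s hs) := hpm.injective
  refine ⟨fun k => pick s hs (2*k), fun l => pick s hs (2*l+1),
    fun a b hab => hpm (by omega), fun a b hab => hpm (by omega), ?_⟩
  rw [Set.eq_empty_iff_forall_notMem]
  rintro z ⟨⟨k, l, hkl, h1⟩, ⟨k', l', hl'k', h2⟩⟩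
  have heq : s (pick s hs (2*k)) * s (pick s hs (2*l+1)) =
      s (pick s hs (2*k')) * s (pick s hs (2*l'+1)) := h1.trans h2.symm
  by_cases hkk : k = k'
  · subst hkk
    have h3 := hpi (hs (mul_left_cancel heq))
    omega
  · by_cases hll : l = l'
    · subst hll
      have h3 := hpi (hs (mul_right_cancel heq))
      omega
    · exact key s hs k l k' l' hkk hll heq
end

section
/- Let S be a left-zero semigroup (xy = x for all x,y ∈ S), and suppose ω is a weight on S bounded below by ε > 0 such that Ω(x,y) = ω(xy)/(ω(x)ω(y)) is 0-cluster. Then S is countable. -/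
/-!
In a left-zero semigroup `ω (x * y) = ω x`, so `Ω x y = 1 / ω y`, and submultiplicativity
applied to `y * y = y` forces `ω ≥ 1`. If uncountably many `y` existed, some level set
`{y | δ ≤ 1 / ω y}` would be infinite; by compactness of `[δ, 1]` an injective sequence in it
has `1 / ω` converging to a limit `a ≥ δ`, which is then a nonzero iterated limit of `Ω`.
-/

open Filter Function

open Set Topology

theorem IsWeight.one_le_of_leftZero {S : Type*} [Mul S] {ω : S → ℝ} (hω : IsWeight ω)
    (hlz : ∀ x y : S, x * y = x) (y : S) : 1 ≤ ω y := by
  have h := hω.2 y y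
  rw [hlz] at h
  exact (le_mul_iff_one_le_right (hω.1 y)).1 (by simpa using h)

theorem IsWeight.ratio_eq_inv_of_leftZero {S : Type*} [Mul S] {ω : S → ℝ} (hω : IsWeight ω)
    (hlz : ∀ x y : S, x * y = x) (x y : S) : ω (x * y) / (ω x * ω y) = (ω y)⁻¹ := by
  rw [hlz, div_mul_eq_div_div, div_self (hω.1 x).ne', one_div]

theorem ZeroCluster.eq_zero_of_tendsto {S : Type*} {f : S → ℝ} (h : ZeroCluster fun _ y => f y)
    {y : ℕ → S} (hy : Injective y) {a : ℝ} (ha : Tendsto (f ∘ y) atTop (𝓝 a)) : a = 0 :=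
  (h y y hy hy a a ⟨fun _ => a, fun _ => ha, tendsto_const_nhds⟩
    ⟨fun m => f (y m), fun _ => tendsto_const_nhds, ha⟩).1

theorem Set.Infinite.exists_injective_tendsto {S X : Type*} [TopologicalSpace X]
    [FirstCountableTopology X] {s : Set S} (hs : s.Infinite) {f : S → X} {K : Set X}
    (hK : IsCompact K) (hf : MapsTo f s K) :
    ∃ y : ℕ → S, Injective y ∧ ∃ a ∈ K, Tendsto (f ∘ y) atTop (𝓝 a) := by
  obtain ⟨a, haK, φ, hφ, ha⟩ :=
    hK.tendsto_subseq fun n => hf (hs.natEmbedding s n).2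
  exact ⟨_, (Subtype.val_injective.comp (hs.natEmbedding s).injective).comp hφ.injective,
    a, haK, ha⟩

theorem countable_of_forall_tendsto_eq_zero {S : Type*} {f : S → ℝ} {B : ℝ}
    (hpos : ∀ s, 0 < f s) (hB : ∀ s, f s ≤ B)
    (hlim : ∀ y : ℕ → S, Injective y → ∀ a, Tendsto (f ∘ y) atTop (𝓝 a) → a = 0) :
    Countable S := by
  have hfin : ∀ δ > 0, {s | δ ≤ f s}.Finite := by
    intro δ hδ
    by_contra hinf
    obtain ⟨y, hy, a, ha, hlim_a⟩ := Set.Infinite.exists_injective_tendsto hinf isCompact_Icc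
      (fun s (hs : δ ≤ f s) => ⟨hs, hB s⟩)
    exact (hδ.trans_le ha.1).ne' (hlim y hy a hlim_a)
  have hcover : (univ : Set S) ⊆ ⋃ n : ℕ, {s | 1 / (n + 1 : ℝ) ≤ f s} := fun s _ =>
    mem_iUnion.2 ((exists_nat_one_div_lt (hpos s)).imp fun _ hn => hn.le)
  exact countable_univ_iff.1 <|
    (countable_iUnion fun n => (hfin _ Nat.one_div_pos_of_nat).countable).mono hcover

theorem leftzero_zeroCluster_countable_general {S : Type*} [Semigroup S]
    (hlz : ∀ x y : S, x * y = x)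
    (ω : S → ℝ) (hω : IsWeight ω)
    (hcl : ZeroCluster (fun x y : S => ω (x * y) / (ω x * ω y))) :
    Countable S := by
  simp only [hω.ratio_eq_inv_of_leftZero hlz] at hcl
  refine countable_of_forall_tendsto_eq_zero (f := fun y => (ω y)⁻¹) (B := 1)
    (fun y => inv_pos.2 (hω.1 y)) (fun y => inv_le_one_of_one_le₀ (hω.one_le_of_leftZero hlz y))
    fun y hy a ha => hcl.eq_zero_of_tendsto hy ha

theorem leftzero_zeroCluster_countable {S : Type*} [Semigroup S]
    (hlz : ∀ x y : S, x * y = x)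
    (ω : S → ℝ) (hω : IsWeight ω) (ε : ℝ) (hε : 0 < ε) (hbdd : ∀ x, ε ≤ ω x)
    (hcl : ZeroCluster (fun x y : S => ω (x * y) / (ω x * ω y))) :
    Countable S :=
  leftzero_zeroCluster_countable_general hlz ω hω hcl
end

section
/- Let S be a countable semigroup. Then there exists a weight ω on S with ω ≥ 1 such that Ω(s,t) = ω(st)/(ω(s)ω(t)) is 0-cluster: for every pair of injective sequences (sₙ), (tₘ) in S, both iterated limits limₙ limₘ Ω(sₙ,tₘ) and limₘ limₙ Ω(sₙ,tₘ), whenever they exist, equal 0. -/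
open Filter Function

/-!
Enumerate `S` injectively by `e : S → ℕ` and give the letter `s` of the free semigroup on `S`
the weight `e s + 1`. Only finitely many words have weight at most `C`, so the least weight
`ℓ s` of a word evaluating to `s` is subadditive and tends to infinity along injective sequences.
For `ω = ℓ + 1` this gives `ω (s * t) + 1 ≤ ω s + ω t`, whence `ω (s * t) ≤ ω s * ω t` and
`ω (s * t) / (ω s * ω t) ≤ (ω s)⁻¹ + (ω t)⁻¹`; both terms of this bound vanish in the limit.
-/

theorem IterLim.eq_zero_of_le_add {F : ℕ → ℕ → ℝ} {L : ℝ} {a b : ℕ → ℝ} (hF : IterLim F L)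
    (hF₀ : ∀ n m, 0 ≤ F n m) (hFab : ∀ n m, F n m ≤ a n + b m)
    (ha : Tendsto a atTop (nhds 0)) (hb : Tendsto b atTop (nhds 0)) : L = 0 := by
  obtain ⟨g, hFg, hgL⟩ := hF
  have hg₀ : ∀ n, 0 ≤ g n := fun n => ge_of_tendsto' (hFg n) (hF₀ n)
  have hga : ∀ n, g n ≤ a n := fun n =>
    le_of_tendsto_of_tendsto' (hFg n) (by simpa using tendsto_const_nhds.add hb) (hFab n)
  exact tendsto_nhds_unique hgL (squeeze_zero hg₀ hga ha)

theorem zeroCluster_of_le_add {S : Type*} {Om : S → S → ℝ} {φ : S → ℝ}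
    (hOm₀ : ∀ s t, 0 ≤ Om s t) (hOm : ∀ s t, Om s t ≤ φ s + φ t)
    (hφ : Tendsto φ cofinite (nhds 0)) : ZeroCluster Om := by
  intro x y hx hy L₁ L₂ h₁ h₂
  have hφx : Tendsto (φ ∘ x) atTop (nhds 0) :=
    hφ.comp (Nat.cofinite_eq_atTop ▸ hx.tendsto_cofinite)
  have hφy : Tendsto (φ ∘ y) atTop (nhds 0) :=
    hφ.comp (Nat.cofinite_eq_atTop ▸ hy.tendsto_cofinite)
  exact ⟨h₁.eq_zero_of_le_add (fun _ _ => hOm₀ _ _) (fun _ _ => hOm _ _) hφx hφy,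
    h₂.eq_zero_of_le_add (fun _ _ => hOm₀ _ _) (fun _ _ => (hOm _ _).trans_eq (add_comm _ _))
      hφy hφx⟩

theorem div_mul_le_inv_add_inv {a b c : ℝ} (ha : 0 < a) (hb : 0 < b) (hc : c ≤ a + b) :
    c / (a * b) ≤ a⁻¹ + b⁻¹ :=
  calc c / (a * b) ≤ (a + b) / (a * b) := by gcongr
    _ = a⁻¹ + b⁻¹ := by field_simp; ring

section WeightOfLength

variable {S : Type*} [Mul S] {ω : S → ℝ}

theorem isWeight_of_add_one_le (hω₁ : ∀ s, 1 ≤ ω s) (hω : ∀ s t, ω (s * t) + 1 ≤ ω s + ω t) :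
    IsWeight ω := by
  refine ⟨fun s => one_pos.trans_le (hω₁ s), fun s t => ?_⟩
  nlinarith [hω s t, mul_nonneg (sub_nonneg.2 (hω₁ s)) (sub_nonneg.2 (hω₁ t))]

theorem zeroCluster_of_add_one_le (hω₁ : ∀ s, 1 ≤ ω s) (hω : ∀ s t, ω (s * t) + 1 ≤ ω s + ω t)
    (hω_tendsto : Tendsto ω cofinite atTop) :
    ZeroCluster (fun s t : S => ω (s * t) / (ω s * ω t)) := by
  have hω₀ : ∀ s, 0 < ω s := fun s => one_pos.trans_le (hω₁ s)
  refine zeroCluster_of_le_add (φ := fun s => (ω s)⁻¹) (fun s t => ?_) (fun s t => ?_)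
    hω_tendsto.inv_tendsto_atTop
  · exact div_nonneg (hω₀ _).le (mul_pos (hω₀ s) (hω₀ t)).le
  · exact div_mul_le_inv_add_inv (hω₀ s) (hω₀ t) (by linarith [hω s t])

end WeightOfLength

theorem List.tendsto_sum_map_cofinite_atTop {α : Type*} {c : α → ℕ}
    (hc : Tendsto c cofinite atTop) (hc₀ : ∀ a, 0 < c a) :
    Tendsto (fun l : List α => (l.map c).sum) cofinite atTop := by
  refine tendsto_atTop.2 fun C => eventually_cofinite.2 ?_
  set T := {a | ¬C ≤ c a}
  have : Finite T := (eventually_cofinite.1 (hc.eventually_ge_atTop C)).to_subtype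
  refine ((List.finite_length_le T C).image (List.map (↑))).subset fun l hl => ?_
  have hl : (l.map c).sum < C := not_le.1 hl
  have hlT : ∀ a ∈ l, a ∈ T := fun a ha hCa =>
    hl.not_ge (hCa.trans (List.le_sum_of_mem (List.mem_map_of_mem ha)))
  lift l to List T using hlT
  refine ⟨l, ?_, rfl⟩
  calc l.length = ((l.map (↑)).map c).length := by simp
    _ ≤ ((l.map (↑)).map c).sum :=
      List.length_le_sum_of_one_le _ fun i hi => by
        obtain ⟨a, -, rfl⟩ := List.mem_map.1 hi
        exact hc₀ a
    _ ≤ C := hl.le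

section WordWeight

variable {α : Type*}

def wordWeight (c : α → ℕ) (w : FreeSemigroup α) : ℕ :=
  ((w.head :: w.tail).map c).sum

theorem wordWeight_mul (c : α → ℕ) (u v : FreeSemigroup α) :
    wordWeight c (u * v) = wordWeight c u + wordWeight c v := by
  simp only [wordWeight, FreeSemigroup.head_mul, FreeSemigroup.tail_mul, List.map_cons,
    List.map_append, List.sum_cons, List.sum_append]
  omega

theorem tendsto_wordWeight {c : α → ℕ} (hc : Tendsto c cofinite atTop) (hc₀ : ∀ a, 0 < c a) :
    Tendsto (wordWeight c) cofinite atTop := by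
  have hinj : Injective fun w : FreeSemigroup α => w.head :: w.tail := fun u v huv => by
    obtain ⟨hhead, htail⟩ := List.cons.inj huv
    exact FreeSemigroup.ext hhead htail
  exact (List.tendsto_sum_map_cofinite_atTop hc hc₀).comp hinj.tendsto_cofinite

end WordWeight

section FiberInf

variable {F S : Type*}

noncomputable def fiberInf (π : F → S) (wt : F → ℕ) (s : S) : ℕ :=
  sInf (wt '' (π ⁻¹' {s}))

variable {π : F → S} {wt : F → ℕ}

theorem exists_wt_eq_fiberInf (hπ : Surjective π) (s : S) :
    ∃ w, π w = s ∧ wt w = fiberInf π wt s := by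
  obtain ⟨w, hw⟩ := hπ s
  obtain ⟨v, hv, hv'⟩ := Nat.sInf_mem (⟨wt w, w, hw, rfl⟩ : (wt '' (π ⁻¹' {s})).Nonempty)
  exact ⟨v, hv, hv'⟩

theorem fiberInf_apply_le (w : F) : fiberInf π wt (π w) ≤ wt w :=
  Nat.sInf_le ⟨w, rfl, rfl⟩

theorem fiberInf_mul_le [Mul F] [Mul S] (π : F →ₙ* S) (hπ : Surjective π)
    (hwt : ∀ u v, wt (u * v) ≤ wt u + wt v) (s t : S) :
    fiberInf π wt (s * t) ≤ fiberInf π wt s + fiberInf π wt t := by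
  obtain ⟨u, rfl, hu⟩ := exists_wt_eq_fiberInf (wt := wt) hπ s
  obtain ⟨v, rfl, hv⟩ := exists_wt_eq_fiberInf (wt := wt) hπ t
  calc fiberInf π wt (π u * π v) = fiberInf π wt (π (u * v)) := by rw [map_mul]
    _ ≤ wt (u * v) := fiberInf_apply_le _
    _ ≤ _ := by rw [← hu, ← hv]; exact hwt u v

theorem tendsto_fiberInf (hπ : Surjective π) (hwt : Tendsto wt cofinite atTop) :
    Tendsto (fiberInf π wt) cofinite atTop := by
  refine tendsto_atTop.2 fun C => eventually_cofinite.2 ?_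
  refine ((eventually_cofinite.1 (hwt.eventually_ge_atTop C)).image π).subset fun s hs => ?_
  obtain ⟨w, rfl, hw⟩ := exists_wt_eq_fiberInf (wt := wt) hπ s
  exact ⟨w, show ¬C ≤ wt w by rwa [hw], rfl⟩

end FiberInf

theorem exists_subadditive_tendsto_cofinite_atTop (S : Type*) [Semigroup S] [Countable S] :
    ∃ ℓ : S → ℕ, (∀ s t, ℓ (s * t) ≤ ℓ s + ℓ t) ∧ Tendsto ℓ cofinite atTop := by
  obtain ⟨e, he⟩ := Countable.exists_injective_nat S
  have hπ : Surjective (FreeSemigroup.lift id : FreeSemigroup S →ₙ* S) := fun s =>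
    ⟨FreeSemigroup.of s, rfl⟩
  have hc : Tendsto (fun s => e s + 1) cofinite atTop :=
    tendsto_atTop_mono (fun s => (e s).le_succ) (Nat.cofinite_eq_atTop ▸ he.tendsto_cofinite)
  exact ⟨fiberInf (FreeSemigroup.lift id) (wordWeight fun s => e s + 1),
    fiberInf_mul_le _ hπ fun u v => (wordWeight_mul _ u v).le,
    tendsto_fiberInf hπ (tendsto_wordWeight hc fun s => (e s).succ_pos)⟩

theorem countable_semigroup_admits_zeroCluster_weight
    {S : Type*} [Semigroup S] [Countable S] :
    ∃ ω : S → ℝ, IsWeight ω ∧ (∀ s, 1 ≤ ω s) ∧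
      ZeroCluster (fun s t : S => ω (s * t) / (ω s * ω t)) := by
  obtain ⟨ℓ, hℓ_mul, hℓ_tendsto⟩ := exists_subadditive_tendsto_cofinite_atTop S
  set ω : S → ℝ := fun s => ℓ s + 1
  have hω₁ : ∀ s, 1 ≤ ω s := fun s => le_add_of_nonneg_left (Nat.cast_nonneg _)
  have hω : ∀ s t, ω (s * t) + 1 ≤ ω s + ω t := fun s t => by
    have : (ℓ (s * t) : ℝ) ≤ ℓ s + ℓ t := by exact_mod_cast hℓ_mul s t
    simp only [ω]
    linarith
  have hω_tendsto : Tendsto ω cofinite atTop :=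
    tendsto_atTop_add_const_right _ 1 (tendsto_natCast_atTop_atTop.comp hℓ_tendsto)
  exact ⟨ω, isWeight_of_add_one_le hω₁ hω, hω₁, zeroCluster_of_add_one_le hω₁ hω hω_tendsto⟩
end
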